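/- For every real number d with 0 ≤ d ≤ 2√3, the probabilistic-sum identity (1/4)·f_I(d) + (1/2)·f_P(d) + (1/8)·f_LD(d) + (1/8)·f_SD(d) = (1/2)·f_I(d/2) holds, where f_I, f_P, f_LD, f_SD are the explicit piecewise density functions defined in the context. (This is the recursion validating that the distance density in a rhombus of side 2, which by scaling is (1/2)·f_I(d/2), equals the probabilistic mixture of the four adjacency cases of the four unit sub-rhombuses.) -/

import Mathlib

open Real

noncomputable section

/-- Density of the distance between two uniform points in the same unit rhombus. -/
def fI (d : ℝ) : ℝ := 2 * d *
  (if 0 ≤ d ∧ d ≤ Real.sqrt 3 / 2 then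
      (4/3 + 2*Real.pi/(9*Real.sqrt 3))*d^2 - (16/3)*d + 2*Real.pi/Real.sqrt 3
    else if Real.sqrt 3 / 2 ≤ d ∧ d ≤ 1 then
      (8/Real.sqrt 3)*(1 + d^2/3)*Real.arcsin (Real.sqrt 3/(2*d)) + (4/3 - 10*Real.pi/(9*Real.sqrt 3))*d^2
        - (16/3)*d + (10/3)*Real.sqrt (4*d^2 - 3) - 2*Real.pi/Real.sqrt 3
    else if 1 ≤ d ∧ d ≤ Real.sqrt 3 then
      (4/Real.sqrt 3)*(1 - d^2/3)*Real.arcsin (Real.sqrt 3/(2*d)) - (2/3 - 2*Real.pi/(9*Real.sqrt 3))*d^2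
        + Real.sqrt (4*d^2 - 3) - 2*Real.pi/(3*Real.sqrt 3) - 1
    else 0)

/-- Density of the distance between uniform points in two parallel rhombuses sharing a side. -/
def fP (d : ℝ) : ℝ := 2 * d *
  (if 0 ≤ d ∧ d ≤ Real.sqrt 3 / 2 then
      (4/3)*d - (2/3 + Real.pi/(9*Real.sqrt 3))*d^2
    else if Real.sqrt 3 / 2 ≤ d ∧ d ≤ 1 then
      -(2/Real.sqrt 3)*(d^2 + 2)*Real.arcsin (Real.sqrt 3/(2*d)) + (8*Real.pi/(9*Real.sqrt 3) - 2/3)*d^2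
        + (4/3)*d - (11/6)*Real.sqrt (4*d^2 - 3) + 2*Real.pi/Real.sqrt 3
    else if 1 ≤ d ∧ d ≤ Real.sqrt 3 then
      (4*d^2/(3*Real.sqrt 3))*Real.arcsin (Real.sqrt 3/(2*d)) + (2/3 - 2*Real.pi/(9*Real.sqrt 3))*d^2
        - (8/3)*d + Real.sqrt (4*d^2 - 3)/3 + 2*Real.pi/(3*Real.sqrt 3) + 1/2
    else if Real.sqrt 3 ≤ d ∧ d ≤ 2 then
      (2/Real.sqrt 3 - d^2/(3*Real.sqrt 3))*Real.arcsin (Real.sqrt 3/(2*d))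
        + (2/Real.sqrt 3 + d^2/(3*Real.sqrt 3))*Real.arcsin (Real.sqrt 3/d) + (1/3 - Real.pi/(9*Real.sqrt 3))*d^2
        - (8/3)*d + (7/12)*Real.sqrt (4*d^2 - 3) + Real.sqrt (d^2 - 3) + 3/4 - 2*Real.pi/(3*Real.sqrt 3)
    else if 2 ≤ d ∧ d ≤ Real.sqrt 7 then
      (2/Real.sqrt 3 - d^2/(3*Real.sqrt 3))*(Real.arcsin (Real.sqrt 3/(2*d)) + Real.arcsin (Real.sqrt 3/d))
        + (Real.pi/(9*Real.sqrt 3) - 1/3)*d^2 + (7/12)*Real.sqrt (4*d^2 - 3)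
        + Real.sqrt (d^2 - 3)/3 - 2*Real.pi/(3*Real.sqrt 3) - 5/4
    else 0)

/-- Density of the distance between uniform points in two long-diagonally adjacent rhombuses. -/
def fLD (d : ℝ) : ℝ := 2 * d *
  (if 0 ≤ d ∧ d ≤ 1 then
      (1/3 - Real.pi/(9*Real.sqrt 3))*d^2
    else if 1 ≤ d ∧ d ≤ Real.sqrt 3 then
      -(4*d^2/(3*Real.sqrt 3))*Real.arcsin (Real.sqrt 3/(2*d)) + (Real.pi/(3*Real.sqrt 3) - 1)*d^2
        + (8/3)*d - Real.sqrt (4*d^2 - 3)/3 - 1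
    else if Real.sqrt 3 ≤ d ∧ d ≤ 2 then
      (4/Real.sqrt 3)*(d^2/3 - 2)*Real.arcsin (Real.sqrt 3/(2*d)) + (1/3 - Real.pi/(9*Real.sqrt 3))*d^2
        + (8/3)*d - (7/3)*Real.sqrt (4*d^2 - 3) + 4*Real.pi/(3*Real.sqrt 3) + 1
    else if 2 ≤ d ∧ d ≤ Real.sqrt 7 then
      (4/Real.sqrt 3)*(d^2/3 - 2)*Real.arcsin (Real.sqrt 3/(2*d)) + (2*d^2/(3*Real.sqrt 3))*Real.arcsin (Real.sqrt 3/d)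
        + (1 - Real.pi/(3*Real.sqrt 3))*d^2 - (7/3)*Real.sqrt (4*d^2 - 3)
        + (2/3)*Real.sqrt (d^2 - 3) + 4*Real.pi/(3*Real.sqrt 3) + 3
    else if Real.sqrt 7 ≤ d ∧ d ≤ 2 * Real.sqrt 3 then
      (2/Real.sqrt 3)*(4 - d^2/3)*Real.arcsin (Real.sqrt 3/d) + (Real.pi/(9*Real.sqrt 3) - 1/3)*d^2
        + 2*Real.sqrt (d^2 - 3) - 4*Real.pi/(3*Real.sqrt 3) - 2
    else 0)

/-- Density of the distance between uniform points in two short-diagonally adjacent rhombuses. -/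
def fSD (d : ℝ) : ℝ := 2 * d *
  (if 0 ≤ d ∧ d ≤ Real.sqrt 3 / 2 then
      (1/3 + 2*Real.pi/(9*Real.sqrt 3))*d^2
    else if Real.sqrt 3 / 2 ≤ d ∧ d ≤ 1 then
      (8*d^2/(3*Real.sqrt 3))*Real.arcsin (Real.sqrt 3/(2*d)) + (1/3 - 10*Real.pi/(9*Real.sqrt 3))*d^2
        + (2/3)*Real.sqrt (4*d^2 - 3)
    else if 1 ≤ d ∧ d ≤ Real.sqrt 3 then
      -(4/Real.sqrt 3)*(d^2/3 + 2)*Real.arcsin (Real.sqrt 3/(2*d)) + (1/3 + 2*Real.pi/(9*Real.sqrt 3))*d^2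
        + (8/3)*d - 3*Real.sqrt (4*d^2 - 3) + 8*Real.pi/(3*Real.sqrt 3) + 1
    else if Real.sqrt 3 ≤ d ∧ d ≤ 2 then
      (8/Real.sqrt 3)*Real.arcsin (Real.sqrt 3/d) - d^2 + (8/3)*d + (8/3)*Real.sqrt (d^2 - 3)
        - 8*Real.pi/(3*Real.sqrt 3) - 4
    else 0)

end

/-!
On each interval between consecutive breakpoints `√3 / 2, 1, √3, 2, √7` every density is given by
a single branch. Once `fI (d / 2)` is written in terms of `arcsin (√3 / d)` and `√(d ^ 2 - 3)`,
the atoms that already occur in the far branches of `fP`, `fLD` and `fSD`, the recursion on each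
interval is a polynomial identity in `d`, `π`, `√3`, `√(4 * d ^ 2 - 3)`, `√(d ^ 2 - 3)`,
`arcsin (√3 / (2 * d))` and `arcsin (√3 / d)`.
-/

lemma one_lt_sqrt_three : 1 < √3 := (Real.lt_sqrt zero_le_one).2 (by norm_num)

lemma sqrt_three_lt_two : √3 < 2 := (Real.sqrt_lt' two_pos).2 (by norm_num)

lemma two_lt_sqrt_seven : 2 < √7 := (Real.lt_sqrt zero_le_two).2 (by norm_num)

lemma sqrt_seven_lt_two_mul_sqrt_three : √7 < 2 * √3 :=
  (Real.sqrt_lt' (by positivity)).2 (by rw [mul_pow, Real.sq_sqrt zero_le_three]; norm_num)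

theorem rhombus_density_recursion :
    ∀ d : ℝ, 0 ≤ d → d ≤ 2 * Real.sqrt 3 →
      (1/4) * fI d + (1/2) * fP d + (1/8) * fLD d + (1/8) * fSD d = (1/2) * fI (d/2) := by
  intro d hd₀ hd
  have := one_lt_sqrt_three
  have := sqrt_three_lt_two
  have := two_lt_sqrt_seven
  have := sqrt_seven_lt_two_mul_sqrt_three
  unfold fI fP fLD fSD
  rw [mul_div_cancel₀ d two_ne_zero, show 4 * (d / 2) ^ 2 - 3 = d ^ 2 - 3 by ring]
  obtain h | h | h | h | h | h : d ≤ √3 / 2 ∨ √3 / 2 < d ∧ d ≤ 1 ∨ 1 < d ∧ d ≤ √3 ∨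
      √3 < d ∧ d ≤ 2 ∨ 2 < d ∧ d ≤ √7 ∨ √7 < d := by grind
  all_goals
    simp (disch := grind) only [if_pos, if_neg]
    ring
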